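/- arXiv:1607.02269 — 11 statements merged into one kernel-verified Lean document; each statement's English description precedes it below -/
import Mathlib

section
/- A divisible quantale is locally localic: binary infima distribute over arbitrary suprema, i.e. for every family (f_i) and every g in a divisible quantale Q, (⨆ i, f_i) ⊓ g = ⨆ i, (f_i ⊓ g). -/
/-- A divisible quantale is locally localic: binary infima distribute over suprema. -/
theorem divisible_quantale_locally_localic {Q : Type*} [CompleteLattice Q] [Monoid Q]
    (hl : ∀ (a : Q) (s : Set Q), a * sSup s = ⨆ b ∈ s, a * b)
    (hr : ∀ (a : Q) (s : Set Q), sSup s * a = ⨆ b ∈ s, b * a)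
    (hdiv : ∀ d e : Q, d ≤ e →
      e * sSup {x | e * x ≤ d} = d ∧ sSup {y | y * e ≤ d} * e = d)
    {ι : Type*} (f : ι → Q) (g : Q) :
    (⨆ i, f i) ⊓ g = ⨆ i, f i ⊓ g := by
  have mono_r : ∀ a b c : Q, a ≤ b → a * c ≤ b * c := by
    intro a b c hab
    have hs : sSup {a, b} = b := by rw [sSup_pair, sup_eq_right.mpr hab]
    have h := hr c {a, b}
    rw [hs] at h
    rw [h]
    exact le_biSup (fun x => x * c) (Set.mem_insert a {b})
  have mono_l : ∀ a b c : Q, a ≤ b → c * a ≤ c * b := by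
    intro a b c hab
    have hs : sSup {a, b} = b := by rw [sSup_pair, sup_eq_right.mpr hab]
    have h := hl c {a, b}
    rw [hs] at h
    rw [h]
    exact le_biSup (fun x => c * x) (Set.mem_insert a {b})
  have htop : (⊤ : Q) ≤ 1 := by
    obtain ⟨h1, -⟩ := hdiv 1 ⊤ le_top
    calc (⊤ : Q) = ⊤ * (⊤ * sSup {x : Q | ⊤ * x ≤ 1}) := by rw [h1, mul_one]
      _ = (⊤ * ⊤) * sSup {x : Q | ⊤ * x ≤ 1} := (mul_assoc _ _ _).symm
      _ ≤ ⊤ * sSup {x : Q | ⊤ * x ≤ 1} := mono_r _ _ _ le_top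
      _ = 1 := h1
  set e := ⨆ i, f i with he
  set d := e ⊓ g with hd
  obtain ⟨h1, -⟩ := hdiv d e inf_le_left
  set h := sSup {x : Q | e * x ≤ d} with hh
  apply le_antisymm
  · have hed : d = ⨆ i, f i * h := by
      have h2 := hr h (Set.range f)
      rw [sSup_range, iSup_range] at h2
      rw [← h1]; exact h2
    rw [hed]
    apply iSup_le
    intro i
    apply le_iSup_of_le i
    refine le_inf ?_ ?_
    · calc f i * h ≤ f i * 1 := mono_l _ _ _ (le_trans le_top htop)
        _ = f i := mul_one _
    · calc f i * h ≤ e * h := mono_r _ _ _ (le_iSup f i)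
        _ = d := h1
        _ ≤ g := inf_le_right
  · exact iSup_le fun i => inf_le_inf_right g (le_iSup f i)
end

section
/- Let (X,p) be a generalised partial metric space. Define p_K(y,x) = (p(y,x) − p(x,x)) + (p(y,x) − p(y,y)) (truncated subtractions). Then p_K is a symmetric generalised metric: p_K(x,x) = 0, p_K(x,y) = p_K(y,x), and p_K(x,z) ≤ p_K(x,y) + p_K(y,z), provided p is symmetric (p(x,y) = p(y,x)) and finitely typed (p(x,x) < ∞ for all x). -/
open scoped ENNReal

/-- For a symmetric finitely typed generalised partial metric p, the function
p_K(y,x) = (p(y,x) − p(x,x)) + (p(y,x) − p(y,y)) is a symmetric generalised metric. -/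
theorem partial_metric_pK_symmetric_metric {X : Type*} (p : X → X → ℝ≥0∞)
    (h1 : ∀ x y, p x x ⊔ p y y ≤ p x y)
    (h2 : ∀ x y z, p x z ≤ p x y - p y y + p y z)
    (hsym : ∀ x y, p x y = p y x)
    (hfin : ∀ x, p x x < ⊤) :
    (∀ x, (p x x - p x x) + (p x x - p x x) = 0) ∧
    (∀ x y, (p x y - p y y) + (p x y - p x x) = (p y x - p x x) + (p y x - p y y)) ∧
    (∀ x y z, (p x z - p z z) + (p x z - p x x) ≤
      ((p x y - p y y) + (p x y - p x x)) + ((p y z - p z z) + (p y z - p y y))) := by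
  refine ⟨fun x => by simp, fun x y => by rw [hsym x y, add_comm], fun x y z => ?_⟩
  have hzz : p z z ≤ p y z := le_trans le_sup_right (h1 y z)
  have hxx : p x x ≤ p x y := le_trans le_sup_left (h1 x x |>.trans (le_refl _)) |>.trans (le_trans le_sup_left (h1 x y))
  have hA : p x z - p z z ≤ (p x y - p y y) + (p y z - p z z) := by
    rw [← (ENNReal.cancel_of_ne (hfin z).ne).add_tsub_assoc_of_le hzz]
    exact tsub_le_tsub_right (h2 x y z) _
  have hB : p x z - p x x ≤ (p y z - p y y) + (p x y - p x x) := by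
    have h := h2 z y x
    rw [hsym z x, hsym z y, hsym y x] at h
    calc p x z - p x x ≤ ((p y z - p y y) + p x y) - p x x := tsub_le_tsub_right h _
      _ = (p y z - p y y) + (p x y - p x x) := (ENNReal.cancel_of_ne (hfin x).ne).add_tsub_assoc_of_le hxx _
  calc (p x z - p z z) + (p x z - p x x)
      ≤ ((p x y - p y y) + (p y z - p z z)) + ((p y z - p y y) + (p x y - p x x)) := add_le_add hA hB
    _ = ((p x y - p y y) + (p x y - p x x)) + ((p y z - p z z) + (p y z - p y y)) := by ring
end

section
/- Let (X,p) be a finitely typed generalised partial metric space (p(x,x) < ∞ for all x). For a subset S ⊆ X and a point x ∈ X, define x ∈ cl(S) iff ⨅_{s∈S} (p(x,s) − p(s,s)) + (p(s,x) − p(x,x)) = 0. Then cl is a closure operator: S ⊆ cl(S), S ⊆ T implies cl(S) ⊆ cl(T), and cl(cl(S)) = cl(S). -/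
open scoped ENNReal

/-- The categorical closure of a subset of a generalised partial metric space. -/
def pmCl {X : Type*} (p : X → X → ℝ≥0∞) (S : Set X) : Set X :=
  {x | (⨅ s ∈ S, (p x s - p s s) + (p s x - p x x)) = 0}

/-- The categorical closure on a finitely typed generalised partial metric space
is a closure operator. -/
theorem partial_metric_closure_operator {X : Type*} (p : X → X → ℝ≥0∞)
    (h1 : ∀ x y, p x x ⊔ p y y ≤ p x y)
    (h2 : ∀ x y z, p x z ≤ p x y - p y y + p y z)
    (hfin : ∀ x, p x x < ⊤) :
    (∀ S : Set X, S ⊆ pmCl p S) ∧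
    (∀ S T : Set X, S ⊆ T → pmCl p S ⊆ pmCl p T) ∧
    (∀ S : Set X, pmCl p (pmCl p S) = pmCl p S) := by
  set d : X → X → ℝ≥0∞ := fun x s => (p x s - p s s) + (p s x - p x x) with hd
  have hself : ∀ x, d x x = 0 := by intro x; simp [hd, tsub_self]
  have hcl : ∀ (S : Set X) (x : X), x ∈ pmCl p S ↔ (⨅ s ∈ S, d x s) = 0 := by
    intro S x; rfl
  have htri : ∀ x y z, d x z ≤ d x y + d y z := by
    intro x y z
    have hA : p x z - p z z ≤ (p x y - p y y) + (p y z - p z z) :=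
      calc p x z - p z z ≤ (p x y - p y y + p y z) - p z z :=
            tsub_le_tsub_right (h2 x y z) _
        _ ≤ (p x y - p y y) + (p y z - p z z) := add_tsub_le_assoc
    have hB : p z x - p x x ≤ (p z y - p y y) + (p y x - p x x) :=
      calc p z x - p x x ≤ (p z y - p y y + p y x) - p x x :=
            tsub_le_tsub_right (h2 z y x) _
        _ ≤ (p z y - p y y) + (p y x - p x x) := add_tsub_le_assoc
    calc d x z = (p x z - p z z) + (p z x - p x x) := rfl
      _ ≤ ((p x y - p y y) + (p y z - p z z)) + ((p z y - p y y) + (p y x - p x x)) :=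
          add_le_add hA hB
      _ = ((p x y - p y y) + (p y x - p x x)) + ((p y z - p z z) + (p z y - p y y)) := by ring
      _ = d x y + d y z := rfl
  have hext : ∀ S : Set X, S ⊆ pmCl p S := by
    intro S x hx
    rw [hcl]
    refine le_antisymm ?_ zero_le
    have h := iInf₂_le (f := fun s (_ : s ∈ S) => d x s) x hx
    simpa [hself] using h
  have hmono : ∀ S T : Set X, S ⊆ T → pmCl p S ⊆ pmCl p T := by
    intro S T hST x hx
    rw [hcl] at hx ⊢
    refine le_antisymm ?_ zero_le
    calc (⨅ s ∈ T, d x s) ≤ ⨅ s ∈ S, d x s := le_iInf₂ fun s hs => iInf₂_le s (hST hs)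
      _ = 0 := hx
  refine ⟨hext, hmono, fun S => le_antisymm ?_ (hext _)⟩
  intro x hx
  rw [hcl] at hx ⊢
  refine le_antisymm ?_ zero_le
  refine ENNReal.le_of_forall_pos_le_add fun ε hε _ => ?_
  have hε2 : (0 : ℝ≥0∞) < ε / 2 := by
    simp [ENNReal.div_pos_iff, hε.ne']
  obtain ⟨y, hyS, hy⟩ : ∃ y ∈ pmCl p S, d x y < ε / 2 := by
    have h : (⨅ y ∈ pmCl p S, d x y) < ε / 2 := hx ▸ hε2
    rw [iInf_lt_iff] at h
    obtain ⟨y, hy⟩ := h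
    rw [iInf_lt_iff] at hy
    obtain ⟨hyS, hy⟩ := hy
    exact ⟨y, hyS, hy⟩
  obtain ⟨s, hsS, hs⟩ : ∃ s ∈ S, d y s < ε / 2 := by
    rw [hcl] at hyS
    have h : (⨅ s ∈ S, d y s) < ε / 2 := hyS ▸ hε2
    rw [iInf_lt_iff] at h
    obtain ⟨s, hs⟩ := h
    rw [iInf_lt_iff] at hs
    obtain ⟨hsS, hs⟩ := hs
    exact ⟨s, hsS, hs⟩
  have : d x s < ε := by
    calc d x s ≤ d x y + d y s := htri x y s
      _ < ε / 2 + ε / 2 := ENNReal.add_lt_add hy hs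
      _ = ε := ENNReal.add_halves ε
  calc (⨅ s ∈ S, d x s) ≤ d x s := iInf₂_le s hsS
    _ ≤ 0 + ε := by simpa using this.le
end

section
/- Let (X,p) be a finitely typed generalised partial metric space, with closure cl(S) = {x : ⨅_{s∈S} (p(x,s) − p(s,s)) + (p(s,x) − p(x,x)) = 0}. Then cl is additive: cl(S ∪ T) = cl(S) ∪ cl(T) for all S, T ⊆ X; hence cl is a topological (Kuratowski) closure operator. -/
open scoped ENNReal

/-- The categorical closure on a finitely typed generalised partial metric space is additive. -/
theorem partial_metric_closure_additive {X : Type*} (p : X → X → ℝ≥0∞)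
    (h1 : ∀ x y, p x x ⊔ p y y ≤ p x y)
    (h2 : ∀ x y z, p x z ≤ p x y - p y y + p y z)
    (hfin : ∀ x, p x x < ⊤) :
    ∀ S T : Set X, pmCl p (S ∪ T) = pmCl p S ∪ pmCl p T := by
  intro S T
  ext x
  simp only [pmCl, Set.mem_setOf_eq]
  rw [iInf_union]
  constructor
  · intro h
    rcases (min_eq_bot.mp h) with h | h
    · exact Or.inl h
    · exact Or.inr h
  · rintro (h | h)
    · exact le_antisymm (le_trans inf_le_left h.le) bot_le
    · exact le_antisymm (le_trans inf_le_right h.le) bot_le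
end

section
/- Let (X,p) be a finitely typed generalised partial metric space, and let p^s(x,y) = p(x,y) ⊔ p(y,x) be its symmetrisation. Then the categorical closure of any subset S is the same whether computed with p or with p^s: for all x, ⨅_{s∈S}(p(x,s) − p(s,s)) + (p(s,x) − p(x,x)) = 0 iff ⨅_{s∈S}(p^s(x,s) − p(s,s)) + (p^s(s,x) − p(x,x)) = 0. -/
open scoped ENNReal

/-- The categorical closure on a finitely typed generalised partial metric space coincides
with the closure on its symmetrisation pˢ(x,y) = p(x,y) ⊔ p(y,x). -/
theorem partial_metric_closure_symmetrisation {X : Type*} (p : X → X → ℝ≥0∞)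
    (h1 : ∀ x y, p x x ⊔ p y y ≤ p x y)
    (h2 : ∀ x y z, p x z ≤ p x y - p y y + p y z)
    (hfin : ∀ x, p x x < ⊤) :
    ∀ (S : Set X) (x : X),
      (⨅ s ∈ S, (p x s - p s s) + (p s x - p x x)) = 0 ↔
      (⨅ s ∈ S, ((p x s ⊔ p s x) - p s s) + ((p s x ⊔ p x s) - p x x)) = 0 := by
  intro S x
  -- key inequality: the symmetrised term is at most twice the original term
  have key : ∀ s : X, ((p x s ⊔ p s x) - p s s) + ((p s x ⊔ p x s) - p x x)
      ≤ ((p x s - p s s) + (p s x - p x x)) + ((p x s - p s s) + (p s x - p x x)) := by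
    intro s
    have hxs : p x s ≤ (p x s - p s s) + p s s := le_tsub_add
    have hsx : p s x ≤ (p s x - p x x) + p x x := le_tsub_add
    have hxx_le : p x x ≤ p x s := le_trans le_sup_left (h1 x s)
    have hss_le : p s s ≤ p s x := le_trans le_sup_left (h1 s x)
    have A : (p x s ⊔ p s x) - p s s ≤ (p x s - p s s) + (p s x - p x x) := by
      rw [tsub_le_iff_right]
      refine sup_le ?_ ?_
      · calc p x s ≤ (p x s - p s s) + p s s := hxs
          _ ≤ (p x s - p s s) + (p s x - p x x) + p s s := by
              gcongr; exact le_add_right le_rfl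
      · calc p s x ≤ (p s x - p x x) + p x x := hsx
          _ ≤ (p s x - p x x) + ((p x s - p s s) + p s s) := by
              gcongr; exact hxx_le.trans hxs
          _ = (p x s - p s s) + (p s x - p x x) + p s s := by ring
    have B : (p s x ⊔ p x s) - p x x ≤ (p x s - p s s) + (p s x - p x x) := by
      rw [tsub_le_iff_right]
      refine sup_le ?_ ?_
      · calc p s x ≤ (p s x - p x x) + p x x := hsx
          _ ≤ (p x s - p s s) + (p s x - p x x) + p x x := by
              gcongr; exact le_add_left le_rfl
      · calc p x s ≤ (p x s - p s s) + p s s := hxs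
          _ ≤ (p x s - p s s) + ((p s x - p x x) + p x x) := by
              gcongr; exact hss_le.trans hsx
          _ = (p x s - p s s) + (p s x - p x x) + p x x := by ring
    exact add_le_add A B
  constructor
  · intro h
    refine le_antisymm ?_ zero_le
    refine ENNReal.le_of_forall_pos_le_add fun ε hε _ => ?_
    rw [zero_add]
    have hε2 : (0 : ℝ≥0∞) < ε / 2 :=
      ENNReal.half_pos (by exact_mod_cast hε.ne')
    have hlt : (⨅ s ∈ S, (p x s - p s s) + (p s x - p x x)) < ε / 2 := h ▸ hε2
    obtain ⟨s, hsS, hs⟩ : ∃ s ∈ S, (p x s - p s s) + (p s x - p x x) < ε / 2 := by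
      simpa [iInf_lt_iff] using hlt
    calc (⨅ s ∈ S, ((p x s ⊔ p s x) - p s s) + ((p s x ⊔ p x s) - p x x))
        ≤ ((p x s ⊔ p s x) - p s s) + ((p s x ⊔ p x s) - p x x) := iInf₂_le s hsS
      _ ≤ ((p x s - p s s) + (p s x - p x x)) + ((p x s - p s s) + (p s x - p x x)) := key s
      _ ≤ ε / 2 + ε / 2 := add_le_add hs.le hs.le
      _ = ε := ENNReal.add_halves _
  · intro h
    refine le_antisymm (le_trans ?_ h.le) zero_le
    refine le_iInf₂ fun s hs => ?_
    refine le_trans (iInf₂_le s hs) ?_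
    gcongr <;> exact le_sup_left
end

section
/- Let (X,p) be a finitely typed generalised partial metric space and define p₀(y,x) = p(y,x) − p(x,x). Then for every subset S and point x: ⨅_{s∈S}(p(x,s) − p(s,s)) + (p(s,x) − p(x,x)) = 0 iff ⨅_{s∈S} p₀(x,s) ⊔ p₀(s,x) = 0. In other words, the categorical topology of (X,p) coincides with the topology induced by the symmetrised generalised metric (p₀)^s. -/
open scoped ENNReal

/-- The categorical topology of a finitely typed generalised partial metric space coincides
with the topology induced by the symmetrised generalised metric (p₀)ˢ. -/
theorem partial_metric_topology_metrisable {X : Type*} (p : X → X → ℝ≥0∞)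
    (h1 : ∀ x y, p x x ⊔ p y y ≤ p x y)
    (h2 : ∀ x y z, p x z ≤ p x y - p y y + p y z)
    (hfin : ∀ x, p x x < ⊤) :
    ∀ (S : Set X) (x : X),
      (⨅ s ∈ S, (p x s - p s s) + (p s x - p x x)) = 0 ↔
      (⨅ s ∈ S, (p x s - p s s) ⊔ (p s x - p x x)) = 0 := by
  intro S x
  constructor
  · intro h
    refine le_antisymm ?_ zero_le
    rw [← h]
    exact iInf₂_mono fun s _ => max_le le_self_add le_add_self
  · intro h
    refine le_antisymm ?_ zero_le
    refine ENNReal.le_of_forall_pos_le_add fun ε hε _ => ?_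
    have hε2 : (0 : ℝ≥0∞) < (ε : ℝ≥0∞) / 2 := by
      simp [ENNReal.div_pos_iff, hε.ne']
    have hlt : (⨅ s ∈ S, (p x s - p s s) ⊔ (p s x - p x x)) < (ε : ℝ≥0∞) / 2 := by
      rw [h]; exact hε2
    obtain ⟨s, hss'⟩ := iInf_lt_iff.mp hlt
    obtain ⟨hs, hss⟩ := iInf_lt_iff.mp hss'
    have hsum : (p x s - p s s) + (p s x - p x x) ≤ (ε : ℝ≥0∞) := by
      calc (p x s - p s s) + (p s x - p x x)
          ≤ ((p x s - p s s) ⊔ (p s x - p x x)) + ((p x s - p s s) ⊔ (p s x - p x x)) :=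
            add_le_add le_sup_left le_sup_right
        _ ≤ (ε : ℝ≥0∞) / 2 + (ε : ℝ≥0∞) / 2 := add_le_add hss.le hss.le
        _ = ε := ENNReal.add_halves _
    calc (⨅ s ∈ S, (p x s - p s s) + (p s x - p x x)) ≤ _ := biInf_le _ hs
      _ ≤ ε := hsum
      _ ≤ 0 + ε := by simp
end

section
/- Let (X,p) be a finitely typed generalised partial metric space. Define two typed sequences (x_n), (y_n) (i.e. lim p(x_n,x_n) and lim p(y_n,y_n) exist in [0,∞)) to be equivalent if lim p(x_n,y_n) = lim p(x_n,x_n) = lim p(y_n,y_n) = lim p(y_n,x_n). Then this relation is transitive: if (x_n) ∼ (y_n) and (y_n) ∼ (z_n) then (x_n) ∼ (z_n). -/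
open Filter Topology
open scoped ENNReal

/-- Equivalence of typed sequences in a generalised partial metric space: both sequences
are typed of the same (finite) type q and lim p(x_n,y_n) = q = lim p(y_n,x_n). -/
def SeqEquiv {X : Type*} (p : X → X → ℝ≥0∞) (x y : ℕ → X) : Prop :=
  ∃ q : ℝ≥0∞, q < ⊤ ∧
    Tendsto (fun n => p (x n) (x n)) atTop (𝓝 q) ∧
    Tendsto (fun n => p (y n) (y n)) atTop (𝓝 q) ∧
    Tendsto (fun n => p (x n) (y n)) atTop (𝓝 q) ∧
    Tendsto (fun n => p (y n) (x n)) atTop (𝓝 q)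

/-- The equivalence of typed sequences is transitive. -/
theorem seqEquiv_trans {X : Type*} (p : X → X → ℝ≥0∞)
    (h1 : ∀ x y, p x x ⊔ p y y ≤ p x y)
    (h2 : ∀ x y z, p x z ≤ p x y - p y y + p y z)
    (hfin : ∀ x, p x x < ⊤)
    (x y z : ℕ → X)
    (hxy : SeqEquiv p x y) (hyz : SeqEquiv p y z) :
    SeqEquiv p x z := by
  obtain ⟨q, hq, hxx, hyy, hxy1, hyx⟩ := hxy
  obtain ⟨r, hr, hyy', hzz, hyz1, hzy⟩ := hyz
  have hqr : q = r := tendsto_nhds_unique hyy hyy'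
  subst hqr
  have hub' : Tendsto (fun n => p (x n) (y n) - p (y n) (y n) + p (y n) (z n)) atTop (𝓝 q) := by
    simpa [tsub_self] using (ENNReal.Tendsto.sub hxy1 hyy (Or.inl hq.ne)).add hyz1
  have hxz : Tendsto (fun n => p (x n) (z n)) atTop (𝓝 q) :=
    tendsto_of_tendsto_of_tendsto_of_le_of_le hxx hub'
      (fun n => le_trans le_sup_left (h1 _ _)) (fun n => h2 _ _ _)
  have hub2 : Tendsto (fun n => p (z n) (y n) - p (y n) (y n) + p (y n) (x n)) atTop (𝓝 q) := by
    simpa [tsub_self] using (ENNReal.Tendsto.sub hzy hyy (Or.inl hq.ne)).add hyx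
  have hzx : Tendsto (fun n => p (z n) (x n)) atTop (𝓝 q) :=
    tendsto_of_tendsto_of_tendsto_of_le_of_le hzz hub2
      (fun n => le_trans le_sup_left (h1 _ _)) (fun n => h2 _ _ _)
  exact ⟨q, hq, hxx, hzz, hxz, hzx⟩
end

section
/- Let (X,p) be a finitely typed generalised partial metric space and let (x_n), (y_n) be Cauchy sequences, i.e. the double-indexed nets (p(x_n,x_m)) and (p(y_n,y_m)) are Cauchy nets in [0,∞). Then the net (p(x_n,y_m))_{n,m} is a Cauchy net in [0,∞), i.e. for every ε > 0 there is N such that for all n,m,n',m' ≥ N, |p(x_n,y_m) − p(x_{n'},y_{m'})| ≤ ε. -/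
open scoped ENNReal

/-- A doubly indexed net in [0,∞] is Cauchy. -/
def CauchyNet2 (a : ℕ → ℕ → ℝ≥0∞) : Prop :=
  ∀ ε : ℝ≥0∞, 0 < ε → ∃ N : ℕ, ∀ n m n' m' : ℕ, N ≤ n → N ≤ m → N ≤ n' → N ≤ m' →
    a n m ≤ a n' m' + ε ∧ a n' m' ≤ a n m + ε

/-- If (x_n) and (y_n) are Cauchy sequences in a finitely typed generalised partial metric
space, then the mixed net (p(x_n,y_m)) is Cauchy. -/
theorem partial_metric_mixed_cauchy {X : Type*} (p : X → X → ℝ≥0∞)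
    (h1 : ∀ x y, p x x ⊔ p y y ≤ p x y)
    (h2 : ∀ x y z, p x z ≤ p x y - p y y + p y z)
    (hfin : ∀ x, p x x < ⊤)
    (x y : ℕ → X)
    (hx : CauchyNet2 (fun n m => p (x n) (x m)))
    (hy : CauchyNet2 (fun n m => p (y n) (y m))) :
    CauchyNet2 (fun n m => p (x n) (y m)) := by
  intro ε hε
  have hε2 : 0 < ε / 2 := ENNReal.half_pos hε.ne'
  obtain ⟨N1, hN1⟩ := hx (ε / 2) hε2
  obtain ⟨N2, hN2⟩ := hy (ε / 2) hε2
  refine ⟨max N1 N2, ?_⟩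
  have key : ∀ a b c d : ℕ, max N1 N2 ≤ a → max N1 N2 ≤ b → max N1 N2 ≤ c →
      max N1 N2 ≤ d → p (x a) (y b) ≤ p (x c) (y d) + ε := by
    intro a b c d ha hb hc hd
    have hxa : p (x a) (x c) ≤ p (x c) (x c) + ε / 2 :=
      (hN1 a c c c (le_of_max_le_left ha) (le_of_max_le_left hc) (le_of_max_le_left hc)
        (le_of_max_le_left hc)).1
    have hyb : p (y d) (y b) ≤ p (y d) (y d) + ε / 2 :=
      (hN2 d b d d (le_of_max_le_right hd) (le_of_max_le_right hb) (le_of_max_le_right hd)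
        (le_of_max_le_right hd)).1
    have hle : p (y d) (y d) ≤ p (x c) (y d) := le_sup_right.trans (h1 (x c) (y d))
    calc p (x a) (y b) ≤ p (x a) (x c) - p (x c) (x c) + p (x c) (y b) := h2 _ _ _
      _ ≤ (p (x c) (x c) + ε / 2 - p (x c) (x c)) + p (x c) (y b) := by
          gcongr
      _ = ε / 2 + p (x c) (y b) := by
          rw [ENNReal.add_sub_cancel_left (hfin (x c)).ne]
      _ ≤ ε / 2 + (p (x c) (y d) - p (y d) (y d) + p (y d) (y b)) := by
          gcongr
          exact h2 _ _ _
      _ ≤ ε / 2 + (p (x c) (y d) - p (y d) (y d) + (p (y d) (y d) + ε / 2)) := by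
          gcongr
      _ = ε / 2 + ((p (x c) (y d) - p (y d) (y d) + p (y d) (y d)) + ε / 2) := by
          rw [add_assoc]
      _ = ε / 2 + (p (x c) (y d) + ε / 2) := by
          rw [tsub_add_cancel_of_le hle]
      _ = p (x c) (y d) + ε := by
          rw [← add_assoc, add_comm (ε / 2), add_assoc, ENNReal.add_halves]
  intro n m n' m' hn hm hn' hm'
  exact ⟨key n m n' m' hn hm hn' hm', key n' m' n m hn' hm' hn hm⟩
end

section
/- Let (X,p) be a finitely typed generalised partial metric space and let (x_n) be a Cauchy sequence with q = lim_{n,m→∞} p(x_n,x_m). Define φ(y) = lim_n p(y,x_n) and ψ(y) = lim_n p(x_n,y). Then for all x,y ∈ X: q ⊔ p(y,y) ≤ φ(y), φ(y) ≤ (p(y,x) − p(x,x)) + φ(x), q ⊔ p(y,y) ≤ ψ(y), and ψ(y) ≤ ψ(x) − p(x,x) + p(x,y). -/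
open Filter Topology
open scoped ENNReal

/-- The limits φ(y) = lim p(y,x_n) and ψ(y) = lim p(x_n,y) of a Cauchy sequence (x_n)
of type q form a presheaf and a copresheaf of type q. -/
theorem partial_metric_cauchy_presheaf {X : Type*} (p : X → X → ℝ≥0∞)
    (h1 : ∀ x y, p x x ⊔ p y y ≤ p x y)
    (h2 : ∀ x y z, p x z ≤ p x y - p y y + p y z)
    (hfin : ∀ x, p x x < ⊤)
    (x : ℕ → X) (q : ℝ≥0∞) (φ ψ : X → ℝ≥0∞)
    (hC : CauchyNet2 (fun n m => p (x n) (x m)))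
    (hq : Tendsto (fun nm : ℕ × ℕ => p (x nm.1) (x nm.2)) (atTop ×ˢ atTop) (𝓝 q))
    (hφ : ∀ y, Tendsto (fun n => p y (x n)) atTop (𝓝 (φ y)))
    (hψ : ∀ y, Tendsto (fun n => p (x n) y) atTop (𝓝 (ψ y))) :
    ∀ a y : X,
      q ⊔ p y y ≤ φ y ∧ φ y ≤ (p y a - p a a) + φ a ∧
      q ⊔ p y y ≤ ψ y ∧ ψ y ≤ ψ a - p a a + p a y := by
  intro a y
  have hdiag : Tendsto (fun n => p (x n) (x n)) atTop (𝓝 q) :=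
    hq.comp (Filter.Tendsto.prodMk tendsto_id tendsto_id)
  refine ⟨?_, ?_, ?_, ?_⟩
  · refine sup_le ?_ ?_
    · exact le_of_tendsto_of_tendsto' hdiag (hφ y) fun n => le_sup_right.trans (h1 y (x n))
    · exact ge_of_tendsto' (hφ y) fun n => le_sup_left.trans (h1 y (x n))
  · exact le_of_tendsto_of_tendsto' (hφ y) ((hφ a).const_add _) fun n => h2 y a (x n)
  · refine sup_le ?_ ?_
    · exact le_of_tendsto_of_tendsto' hdiag (hψ y) fun n => le_sup_left.trans (h1 (x n) y)
    · exact ge_of_tendsto' (hψ y) fun n => le_sup_right.trans (h1 (x n) y)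
  · have : Tendsto (fun n => p (x n) a - p a a + p a y) atTop (𝓝 (ψ a - p a a + p a y)) :=
      Tendsto.add (ENNReal.Tendsto.sub (hψ a) tendsto_const_nhds (Or.inr (hfin a).ne)) tendsto_const_nhds
    exact le_of_tendsto_of_tendsto' (hψ y) this fun n => h2 (x n) a y
end

section
/- Let (X,p) be a finitely typed generalised partial metric space, (x_n) a Cauchy sequence with type q = lim_{n,m} p(x_n,x_m), φ(y) = lim_n p(y,x_n) and ψ(y) = lim_n p(x_n,y). Then the adjunction inequalities hold: (i) ⨅_{z∈X} (ψ(z) − p(z,z)) + φ(z) ≤ q, and (ii) for all x,y ∈ X, p(y,x) ≤ (φ(y) − q) + ψ(x). -/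
open Filter Topology
open scoped ENNReal

lemma aux_tsub_add (a b d : ℝ≥0∞) : (a + d) - (b - d) ≤ (a - b) + (d + d) := by
  rw [tsub_le_iff_right]
  calc a + d ≤ ((a - b) + b) + d := by gcongr; exact le_tsub_add
    _ ≤ ((a - b) + ((b - d) + d)) + d := by gcongr; exact le_tsub_add
    _ = (a - b) + (d + d) + (b - d) := by ring

/-- The presheaf φ and copresheaf ψ associated with a Cauchy sequence of type q
form an adjoint pair: the unit and counit inequalities hold. -/
theorem partial_metric_cauchy_adjoint {X : Type*} (p : X → X → ℝ≥0∞)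
    (h1 : ∀ x y, p x x ⊔ p y y ≤ p x y)
    (h2 : ∀ x y z, p x z ≤ p x y - p y y + p y z)
    (hfin : ∀ x, p x x < ⊤)
    (x : ℕ → X) (q : ℝ≥0∞) (φ ψ : X → ℝ≥0∞)
    (hC : CauchyNet2 (fun n m => p (x n) (x m)))
    (hq : Tendsto (fun nm : ℕ × ℕ => p (x nm.1) (x nm.2)) (atTop ×ˢ atTop) (𝓝 q))
    (hφ : ∀ y, Tendsto (fun n => p y (x n)) atTop (𝓝 (φ y)))
    (hψ : ∀ y, Tendsto (fun n => p (x n) y) atTop (𝓝 (ψ y))) :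
    (⨅ z : X, (ψ z - p z z) + φ z) ≤ q ∧
    (∀ a y : X, p y a ≤ (φ y - q) + ψ a) := by
  -- q is finite
  have hqt : q ≠ ⊤ := by
    obtain ⟨N, hN⟩ := hC 1 one_pos
    have hb : ∀ᶠ nm : ℕ × ℕ in atTop ×ˢ atTop,
        p (x nm.1) (x nm.2) ≤ p (x N) (x N) + 1 := by
      filter_upwards [(eventually_ge_atTop N).prod_mk (eventually_ge_atTop N)] with nm hnm
      exact (hN nm.1 nm.2 N N hnm.1 hnm.2 le_rfl le_rfl).1
    have : q ≤ p (x N) (x N) + 1 := le_of_tendsto hq hb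
    exact (this.trans_lt (ENNReal.add_lt_top.2 ⟨hfin (x N), ENNReal.one_lt_top⟩)).ne
  -- bounds from hq, for every positive d
  have key : ∀ d : ℝ≥0∞, 0 < d → ∃ M : ℕ, ∀ n m : ℕ, M ≤ n → M ≤ m →
      p (x n) (x m) ∈ Set.Icc (q - d) (q + d) := by
    intro d hd
    have hmem : Set.Icc (q - d) (q + d) ∈ 𝓝 q := ENNReal.Icc_mem_nhds hqt hd.ne'
    have hq' : ∀ᶠ nm : ℕ × ℕ in atTop ×ˢ atTop,
        p (x nm.1) (x nm.2) ∈ Set.Icc (q - d) (q + d) :=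
      hq.eventually (eventually_of_mem hmem fun y hy => hy)
    rw [Filter.prod_atTop_atTop_eq, eventually_atTop] at hq'
    obtain ⟨N, hN⟩ := hq'
    exact ⟨max N.1 N.2, fun n m hn hm =>
      hN (n, m) ⟨(le_max_left _ _).trans hn, (le_max_right _ _).trans hm⟩⟩
  constructor
  · -- unit inequality
    refine ENNReal.le_of_forall_pos_le_add fun ε hε _ => ?_
    have hd : (0 : ℝ≥0∞) < ε / 3 := by
      simp [ENNReal.div_pos_iff, hε.ne']
    obtain ⟨M, hM⟩ := key (ε / 3) hd
    have hψM : ψ (x M) ≤ q + ε / 3 :=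
      le_of_tendsto (hψ (x M)) (by
        filter_upwards [eventually_ge_atTop M] with m hm
        exact (hM m M hm le_rfl).2)
    have hφM : φ (x M) ≤ q + ε / 3 :=
      le_of_tendsto (hφ (x M)) (by
        filter_upwards [eventually_ge_atTop M] with m hm
        exact (hM M m le_rfl hm).2)
    have hdiag : q - ε / 3 ≤ p (x M) (x M) := (hM M M le_rfl le_rfl).1
    calc (⨅ z : X, (ψ z - p z z) + φ z) ≤ (ψ (x M) - p (x M) (x M)) + φ (x M) :=
          iInf_le _ (x M)
      _ ≤ ((q + ε / 3) - (q - ε / 3)) + (q + ε / 3) :=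
          add_le_add (tsub_le_tsub hψM hdiag) hφM
      _ ≤ ((q - q) + (ε / 3 + ε / 3)) + (q + ε / 3) :=
          add_le_add (aux_tsub_add _ _ _) le_rfl
      _ = q + (ε / 3 + ε / 3 + ε / 3) := by rw [tsub_self]; ring
      _ = q + ε := by rw [ENNReal.add_thirds]
  · -- counit inequality
    intro a y
    refine ENNReal.le_of_forall_pos_le_add fun ε hε hfin' => ?_
    have hd : (0 : ℝ≥0∞) < ε / 3 := by
      simp [ENNReal.div_pos_iff, hε.ne']
    obtain ⟨M, hM⟩ := key (ε / 3) hd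
    have hφt : φ y < ⊤ := by
      have h1' : φ y - q < ⊤ := (le_add_right le_rfl).trans_lt hfin'
      calc φ y ≤ (φ y - q) + q := le_tsub_add
        _ < ⊤ := ENNReal.add_lt_top.2 ⟨h1', hqt.lt_top⟩
    have hψt : ψ a < ⊤ := ((le_add_left le_rfl).trans_lt hfin')
    have E1 : ∀ᶠ n in atTop, p y (x n) ≤ φ y + ε / 3 :=
      ((hφ y).eventually_lt_const (by
        simpa using ENNReal.lt_add_right hφt.ne hd.ne')).mono fun n hn => hn.le
    have E2 : ∀ᶠ n in atTop, p (x n) a ≤ ψ a + ε / 3 :=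
      ((hψ a).eventually_lt_const (by
        simpa using ENNReal.lt_add_right hψt.ne hd.ne')).mono fun n hn => hn.le
    obtain ⟨n, hn1, hn2, hn3⟩ :=
      (E1.and (E2.and (eventually_ge_atTop M))).exists
    have hdiag : q - ε / 3 ≤ p (x n) (x n) := (hM n n hn3 hn3).1
    calc p y a ≤ p y (x n) - p (x n) (x n) + p (x n) a := h2 y (x n) a
      _ ≤ ((φ y + ε / 3) - (q - ε / 3)) + (ψ a + ε / 3) :=
          add_le_add (tsub_le_tsub hn1 hdiag) hn2
      _ ≤ ((φ y - q) + (ε / 3 + ε / 3)) + (ψ a + ε / 3) :=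
          add_le_add (aux_tsub_add _ _ _) le_rfl
      _ = ((φ y - q) + ψ a) + (ε / 3 + ε / 3 + ε / 3) := by ring
      _ = ((φ y - q) + ψ a) + ε := by rw [ENNReal.add_thirds]
end

section
/- Let (X,p) be a finitely typed generalised partial metric space and (x_n), (y_n) Cauchy sequences. Then lim_n p(x_n,y_n) = ⨅_{z∈X} (lim_n p(x_n,z) − p(z,z)) + lim_n p(z,y_n). (All limits exist because the relevant nets are Cauchy.) -/
open Filter Topology
open scoped ENNReal

/-- For Cauchy sequences (x_n), (y_n) in a finitely typed generalised partial metric space,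
lim p(x_n,y_n) = ⨅_z (lim p(x_n,z) − p(z,z)) + lim p(z,y_n). -/
theorem partial_metric_hom_of_cauchy {X : Type*} (p : X → X → ℝ≥0∞)
    (h1 : ∀ x y, p x x ⊔ p y y ≤ p x y)
    (h2 : ∀ x y z, p x z ≤ p x y - p y y + p y z)
    (hfin : ∀ x, p x x < ⊤)
    (x y : ℕ → X) (L : ℝ≥0∞) (φ ψ : X → ℝ≥0∞)
    (hx : CauchyNet2 (fun n m => p (x n) (x m)))
    (hy : CauchyNet2 (fun n m => p (y n) (y m)))
    (hL : Tendsto (fun n => p (x n) (y n)) atTop (𝓝 L))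
    (hφ : ∀ z, Tendsto (fun n => p (x n) z) atTop (𝓝 (φ z)))
    (hψ : ∀ z, Tendsto (fun n => p z (y n)) atTop (𝓝 (ψ z))) :
    L = ⨅ z : X, (φ z - p z z) + ψ z := by
  refine le_antisymm (le_iInf fun z => ?_) ?_
  · have hz : p z z ≠ ⊤ := (hfin z).ne
    have htend : Tendsto (fun n => p (x n) z - p z z + p z (y n)) atTop
        (𝓝 ((φ z - p z z) + ψ z)) :=
      (ENNReal.Tendsto.sub (hφ z) tendsto_const_nhds (Or.inr hz)).add (hψ z)
    exact le_of_tendsto_of_tendsto' hL htend fun n => h2 (x n) z (y n)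
  · -- ⨅ ≤ L
    refine ENNReal.le_of_forall_pos_le_add fun ε hε _ => ?_
    set δ : ℝ≥0∞ := (ε : ℝ≥0∞) / 2 with hδdef
    have hδ : 0 < δ := ENNReal.div_pos (by exact_mod_cast hε.ne') (by norm_num)
    obtain ⟨N, hN⟩ := hy δ hδ
    set q : ℝ≥0∞ := p (y N) (y N) with hq
    -- Claim A : ψ (y N) ≤ q + δ
    have hA : ψ (y N) ≤ q + δ := by
      refine le_of_tendsto (hψ (y N)) ?_
      filter_upwards [eventually_ge_atTop N] with n hn
      exact (hN N n N N le_rfl hn le_rfl le_rfl).1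
    -- Claim B : φ (y N) ≤ L + δ
    have hB : φ (y N) ≤ L + δ := by
      have hle : ∀ n, N ≤ n → p (x n) (y N) ≤ p (x n) (y n) + δ := by
        intro n hn
        have h3 : p (y n) (y N) ≤ p (y n) (y n) + δ :=
          (hN n N n n hn le_rfl hn hn).1
        calc p (x n) (y N) ≤ p (x n) (y n) - p (y n) (y n) + p (y n) (y N) :=
              h2 _ _ _
          _ ≤ p (x n) (y n) - p (y n) (y n) + (p (y n) (y n) + δ) :=
              add_le_add le_rfl h3
          _ = (p (x n) (y n) - p (y n) (y n) + p (y n) (y n)) + δ := by ring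
          _ = p (x n) (y n) + δ := by
              rw [tsub_add_cancel_of_le (le_trans le_sup_right (h1 (x n) (y n)))]
      refine le_of_tendsto_of_tendsto (hφ (y N))
        ((hL.add tendsto_const_nhds : Tendsto (fun n => p (x n) (y n) + δ) atTop _)) ?_
      filter_upwards [eventually_ge_atTop N] with n hn using hle n hn
    -- Claim C : q ≤ φ (y N)
    have hC : q ≤ φ (y N) :=
      ge_of_tendsto (hφ (y N))
        (Eventually.of_forall fun n => le_trans le_sup_right (h1 (x n) (y N)))
    have hqL : q ≤ L + δ := hC.trans hB
    calc (⨅ z : X, (φ z - p z z) + ψ z) ≤ (φ (y N) - q) + ψ (y N) := iInf_le _ _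
      _ ≤ ((L + δ) - q) + (q + δ) :=
          add_le_add (tsub_le_tsub_right hB _) hA
      _ = (((L + δ) - q) + q) + δ := by ring
      _ = (L + δ) + δ := by rw [tsub_add_cancel_of_le hqL]
      _ = L + ε := by rw [add_assoc, hδdef, ENNReal.add_halves]
end
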